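/- Let r > 0, v ∈ ℝ² \ {0}, and θ ∈ (0, π/2). For every ε > 0 with ε(1 + 1/sin θ) ≤ r, the Lebesgue measure of the ε-boundary of the vision cone satisfies Leb(∂^ε C(r,v,θ)) ≤ 4 r ε θ (1 + 1/sin θ). -/

import Mathlib

/-!
The cone `K = C(r,v,θ)` is convex and contains the disc of radius `ρ = r sin θ / (1 + sin θ)`
centred on its axis at distance `r / (1 + sin θ)` from the apex `0`. If a convex set `K` contains
a ball `B(z,ρ)` and `α = ε/ρ ≤ 1`, convexity gives `K + B(0,ε) ⊆ z + (1+α)(K - z)` and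
`z + (1-α)(int K - z) + B(0,ε) ⊆ int K`, so `∂K + B(0,ε)` lies between these two homothetic
copies of `K`; as the boundary of a convex set is null, its area is at most
`((1+α)² - (1-α)²)|K| = 4α|K|`. Polar coordinates give `|K| = r²θ`, and `4 (ε/ρ) r²θ = 4 r ε θ (1 + 1/sin θ)`.
-/

open MeasureTheory Metric Set Pointwise
noncomputable section

/-- The vision cone `C(r,v,θ) := { x ∈ ℝ² : |x| ≤ r and x·v ≥ |x||v| cos θ }`. -/
def visionCone (r : ℝ) (v : EuclideanSpace ℝ (Fin 2)) (θ : ℝ) :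
    Set (EuclideanSpace ℝ (Fin 2)) :=
  {x | ‖x‖ ≤ r ∧ (inner ℝ x v : ℝ) ≥ ‖x‖ * ‖v‖ * Real.cos θ}

open scoped RealInnerProductSpace Real

def circularCone {F : Type*} [NormedAddCommGroup F] [InnerProductSpace ℝ F] (v : F) (θ : ℝ) :
    Set F :=
  {x | ‖x‖ * ‖v‖ * Real.cos θ ≤ ⟪x, v⟫}

section circularCone

variable {F : Type*} [NormedAddCommGroup F] [InnerProductSpace ℝ F] {u v : F} {θ : ℝ}

lemma circularCone_smul {c : ℝ} (hc : 0 < c) : circularCone (c • v) θ = circularCone v θ := by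
  ext x
  have hnorm : ‖x‖ * ‖c • v‖ * Real.cos θ = c * (‖x‖ * ‖v‖ * Real.cos θ) := by
    rw [norm_smul, Real.norm_of_nonneg hc.le]; ring
  simp only [circularCone, mem_ofPred_eq, hnorm, real_inner_smul_right,
    mul_le_mul_iff_of_pos_left hc]

lemma convex_circularCone (hθ : 0 ≤ Real.cos θ) : Convex ℝ (circularCone v θ) := by
  intro x hx y hy a b ha hb _
  calc ‖a • x + b • y‖ * ‖v‖ * Real.cos θ
      ≤ (a * ‖x‖ + b * ‖y‖) * ‖v‖ * Real.cos θ := by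
        gcongr
        refine (norm_add_le _ _).trans_eq ?_
        rw [norm_smul, norm_smul, Real.norm_of_nonneg ha, Real.norm_of_nonneg hb]
    _ = a * (‖x‖ * ‖v‖ * Real.cos θ) + b * (‖y‖ * ‖v‖ * Real.cos θ) := by ring
    _ ≤ a * ⟪x, v⟫ + b * ⟪y, v⟫ := by gcongr <;> assumption
    _ = ⟪a • x + b • y, v⟫ := by rw [inner_add_left, real_inner_smul_left, real_inner_smul_left]

lemma closedBall_subset_circularCone (hu : ‖u‖ = 1) {d : ℝ} (hd : 0 ≤ d) :
    closedBall (d • u) (d * Real.sin θ) ⊆ circularCone u θ := by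
  intro x hx
  rw [mem_closedBall_iff_norm] at hx
  set y := x - d • u
  have hxy : x = d • u + y := by rw [add_sub_cancel]
  have hinner : ⟪x, u⟫ = d + ⟪y, u⟫ := by
    rw [hxy, inner_add_left, real_inner_smul_left, real_inner_self_eq_norm_sq, hu]; ring
  have hnorm : ‖x‖ ^ 2 = d ^ 2 + 2 * d * ⟪y, u⟫ + ‖y‖ ^ 2 := by
    rw [hxy, norm_add_sq_real, norm_smul, Real.norm_of_nonneg hd, hu, real_inner_smul_left,
      real_inner_comm]
    ring
  have hyu : -‖y‖ ≤ ⟪y, u⟫ := by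
    simpa [hu] using neg_le_of_abs_le (abs_real_inner_le_norm y u)
  have hpos : 0 ≤ d + ⟪y, u⟫ := by nlinarith [Real.sin_le_one θ, norm_nonneg y]
  show ‖x‖ * ‖u‖ * Real.cos θ ≤ ⟪x, u⟫
  rw [hu, mul_one, hinner]
  refine le_of_sq_le_sq ?_ hpos
  calc (‖x‖ * Real.cos θ) ^ 2 = Real.cos θ ^ 2 * (d ^ 2 + 2 * d * ⟪y, u⟫ + ‖y‖ ^ 2) := by
        rw [mul_pow, hnorm, mul_comm]
    _ ≤ Real.cos θ ^ 2 * (d ^ 2 + 2 * d * ⟪y, u⟫ + (d * Real.sin θ) ^ 2) := by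
        gcongr
    _ = (d + ⟪y, u⟫) ^ 2 - (d + ⟪y, u⟫ - d * Real.cos θ ^ 2) ^ 2 := by
        linear_combination (Real.cos θ ^ 2 * d ^ 2) * Real.sin_sq_add_cos_sq θ
    _ ≤ (d + ⟪y, u⟫) ^ 2 := sub_le_self _ (sq_nonneg _)

lemma LinearIsometryEquiv.preimage_circularCone {E : Type*} [NormedAddCommGroup E]
    [InnerProductSpace ℝ E] (φ : E ≃ₗᵢ[ℝ] F) (v : E) :
    φ ⁻¹' circularCone (φ v) θ = circularCone v θ := by
  ext x
  simp [circularCone, φ.inner_map_map]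

end circularCone

lemma add_inv_smul_mem_closedBall {E : Type*} [NormedAddCommGroup E] [NormedSpace ℝ E]
    {z e : E} {ρ α : ℝ} (hα : 0 < α) (he : e ∈ closedBall 0 (α * ρ)) :
    z + α⁻¹ • e ∈ closedBall z ρ := by
  rw [mem_closedBall_zero_iff] at he
  rw [mem_closedBall, dist_self_add_left, norm_smul, Real.norm_of_nonneg (inv_pos.2 hα).le,
    inv_mul_le_iff₀ hα]
  exact he

namespace Convex

variable {E : Type*} [NormedAddCommGroup E] [NormedSpace ℝ E] {K : Set E} {z : E} {ρ α : ℝ}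

lemma add_closedBall_subset_image_homothety (hK : Convex ℝ K) (hball : closedBall z ρ ⊆ K)
    (hα : 0 < α) : K + closedBall 0 (α * ρ) ⊆ AffineMap.homothety z (1 + α) '' K := by
  rintro _ ⟨y, hy, e, he, rfl⟩
  have hw := hball (add_inv_smul_mem_closedBall (z := z) hα he)
  refine ⟨(1 + α)⁻¹ • y + (α / (1 + α)) • (z + α⁻¹ • e),
    hK hy hw (by positivity) (by positivity) (by field_simp), ?_⟩
  simp only [AffineMap.homothety_apply, vsub_eq_sub, vadd_eq_add]
  match_scalars <;> field_simp
  ring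

lemma image_homothety_interior_add_closedBall_subset (hK : Convex ℝ K)
    (hball : closedBall z ρ ⊆ K) (hα : 0 < α) (hα1 : α < 1) :
    AffineMap.homothety z (1 - α) '' interior K + closedBall 0 (α * ρ) ⊆ interior K := by
  rintro _ ⟨_, ⟨k, hk, rfl⟩, e, he, rfl⟩
  have hw := hball (add_inv_smul_mem_closedBall (z := z) hα he)
  convert hK.combo_interior_self_mem_interior hk hw (sub_pos.2 hα1) hα.le (by ring) using 1
  simp only [AffineMap.homothety_apply, vsub_eq_sub, vadd_eq_add]
  match_scalars <;> field_simp
  ring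

lemma disjoint_frontier_add_closedBall_image_homothety_interior (hK : Convex ℝ K)
    (hball : closedBall z ρ ⊆ K) (hα : 0 < α) (hα1 : α < 1) :
    Disjoint (frontier K + closedBall 0 (α * ρ))
      (AffineMap.homothety z (1 - α) '' interior K) := by
  rw [disjoint_left]
  rintro _ ⟨y, hy, e, he, rfl⟩ hyeB
  refine hy.2 (hK.image_homothety_interior_add_closedBall_subset hball hα hα1
    ⟨y + e, hyeB, -e, ?_, add_neg_cancel_right y e⟩)
  simpa only [mem_closedBall_zero_iff, norm_neg] using he

open Module Measure

variable [FiniteDimensional ℝ E] [MeasurableSpace E] [BorelSpace E] (μ : Measure E)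
  [μ.IsAddHaarMeasure]

lemma addHaar_image_homothety_closure (hK : Convex ℝ K) (z : E) {c : ℝ} (hc : 0 ≤ c) :
    μ (AffineMap.homothety z c '' closure K) = ENNReal.ofReal (c ^ finrank ℝ E) * μ K := by
  rw [addHaar_image_homothety, measure_closure_of_null_frontier (hK.addHaar_frontier μ),
    abs_of_nonneg (by positivity)]

lemma addHaar_image_homothety_interior (hK : Convex ℝ K) (z : E) {c : ℝ} (hc : 0 ≤ c) :
    μ (AffineMap.homothety z c '' interior K) = ENNReal.ofReal (c ^ finrank ℝ E) * μ K := by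
  rw [addHaar_image_homothety, measure_interior_of_null_frontier (hK.addHaar_frontier μ),
    abs_of_nonneg (by positivity)]

theorem addHaar_frontier_add_closedBall_le [Nontrivial E] (hK : Convex ℝ K) (hKfin : μ K ≠ ⊤)
    (hball : closedBall z ρ ⊆ K) (hα : 0 < α) (hα1 : α ≤ 1) :
    μ (frontier K + closedBall 0 (α * ρ)) ≤
      ENNReal.ofReal ((1 + α) ^ finrank ℝ E - (1 - α) ^ finrank ℝ E) * μ K := by
  obtain hρ | hρ := lt_or_ge ρ 0
  · simp [closedBall_eq_empty.2 (mul_neg_of_pos_of_neg hα hρ)]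
  have h0 : (0 : E) ∈ closedBall 0 (α * ρ) := mem_closedBall_self (by positivity)
  set A := AffineMap.homothety z (1 + α) '' closure K
  have hclosure : closure K + closedBall 0 (α * ρ) ⊆ A :=
    hK.closure.add_closedBall_subset_image_homothety (hball.trans subset_closure) hα
  have hA : frontier K + closedBall 0 (α * ρ) ⊆ A :=
    (add_subset_add_right frontier_subset_closure).trans hclosure
  have hμA : μ A = ENNReal.ofReal ((1 + α) ^ finrank ℝ E) * μ K :=
    hK.addHaar_image_homothety_closure μ z (by positivity)
  obtain hα1 | rfl := hα1.lt_or_eq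
  · set B := AffineMap.homothety z (1 - α) '' interior K
    have hBA : B ⊆ A := (subset_add_left B h0).trans <|
      (hK.image_homothety_interior_add_closedBall_subset hball hα hα1).trans <|
      interior_subset_closure.trans <| (subset_add_left _ h0).trans hclosure
    have hBopen : IsOpen B :=
      AffineMap.homothety_isOpenMap z _ (sub_pos.2 hα1).ne' _ isOpen_interior
    calc μ (frontier K + closedBall 0 (α * ρ)) ≤ μ (A \ B) := measure_mono <|
          subset_sdiff.2 ⟨hA, hK.disjoint_frontier_add_closedBall_image_homothety_interior
            hball hα hα1⟩
      _ = μ A - μ B := measure_sdiff hBA hBopen.nullMeasurableSet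
          (measure_ne_top_of_subset hBA (hμA ▸ ENNReal.mul_ne_top ENNReal.ofReal_ne_top hKfin))
      _ = _ := by
          rw [hμA, hK.addHaar_image_homothety_interior μ z (sub_pos.2 hα1).le,
            ← ENNReal.sub_mul fun _ _ ↦ hKfin,
            ENNReal.ofReal_sub _ (pow_nonneg (sub_pos.2 hα1).le _)]
  · calc μ (frontier K + closedBall 0 (1 * ρ)) ≤ μ A := measure_mono hA
      _ = _ := by rw [hμA, sub_self, zero_pow finrank_pos.ne', sub_zero]

end Convex

lemma Real.cos_le_cos_iff_abs_le {θ φ : ℝ} (hθ : 0 ≤ θ) (hθπ : θ ≤ π) (hφ : |φ| ≤ π) :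
    Real.cos θ ≤ Real.cos φ ↔ |φ| ≤ θ := by
  rw [← Real.cos_abs φ]
  exact Real.strictAntiOn_cos.le_iff_ge ⟨hθ, hθπ⟩ ⟨abs_nonneg φ, hφ⟩

lemma Complex.polarCoord_symm_mem_closedBall_inter_circularCone {r θ : ℝ} (hθ : 0 ≤ θ)
    (hθπ : θ ≤ π) {p : ℝ × ℝ} (hp : p ∈ polarCoord.target) :
    Complex.polarCoord.symm p ∈ closedBall 0 r ∩ circularCone 1 θ ↔
      p ∈ Ioc 0 r ×ˢ Icc (-θ) θ := by
  obtain ⟨hp1, hp2⟩ := hp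
  have hnorm : ‖Complex.polarCoord.symm p‖ = p.1 := by
    rw [Complex.norm_polarCoord_symm, abs_of_pos hp1]
  have hinner : ⟪Complex.polarCoord.symm p, 1⟫ = p.1 * Real.cos p.2 := by
    simp [Complex.inner, Complex.cos_ofReal_re]
  simp only [circularCone, mem_inter_iff, mem_closedBall_zero_iff, mem_ofPred_eq, hnorm, hinner,
    norm_one, mul_one, mul_le_mul_iff_right₀ (show 0 < p.1 from hp1), mem_prod, mem_Ioc,
    mem_Icc, ← abs_le, Real.cos_le_cos_iff_abs_le hθ hθπ (abs_le.2 ⟨hp2.1.le, hp2.2.le⟩)]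
  exact ⟨fun h ↦ ⟨⟨hp1, h.1⟩, h.2⟩, fun h ↦ ⟨h.1.2, h.2⟩⟩

lemma Complex.volume_closedBall_inter_circularCone {r θ : ℝ} (hr : 0 ≤ r) (hθ : 0 ≤ θ)
    (hθπ : θ < π) :
    volume (closedBall (0 : ℂ) r ∩ circularCone 1 θ) = ENNReal.ofReal (r ^ 2 * θ) := by
  set S := closedBall (0 : ℂ) r ∩ circularCone 1 θ
  set R := Ioc 0 r ×ˢ Icc (-θ) θ
  have hS : MeasurableSet S := by
    refine measurableSet_closedBall.inter (measurableSet_le ?_ ?_) <;> fun_prop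
  have hRtarget : R ⊆ polarCoord.target := fun p hp ↦
    ⟨hp.1.1, by linarith [hp.2.1], by linarith [hp.2.2]⟩
  have hR : MeasurableSet R := measurableSet_Ioc.prod measurableSet_Icc
  calc volume S = ∫⁻ w, S.indicator 1 w := (lintegral_indicator_one hS).symm
    _ = ∫⁻ p in polarCoord.target,
          ENNReal.ofReal p.1 • S.indicator 1 (Complex.polarCoord.symm p) :=
        (Complex.lintegral_comp_polarCoord_symm _).symm
    _ = ∫⁻ p in polarCoord.target, R.indicator (fun p ↦ ENNReal.ofReal p.1) p := by
        refine setLIntegral_congr_fun polarCoord.open_target.measurableSet fun p hp ↦ ?_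
        have hkey : Complex.polarCoord.symm p ∈ S ↔ p ∈ R :=
          polarCoord_symm_mem_closedBall_inter_circularCone hθ hθπ.le hp
        by_cases hpR : p ∈ R
        · rw [indicator_of_mem hpR, indicator_of_mem (hkey.2 hpR), Pi.one_apply, smul_eq_mul,
            mul_one]
        · rw [indicator_of_notMem hpR, indicator_of_notMem (mt hkey.1 hpR), smul_zero]
    _ = ∫⁻ p in R, ENNReal.ofReal p.1 := by
        rw [lintegral_indicator hR, Measure.restrict_restrict hR, inter_eq_left.2 hRtarget]
    _ = ∫⁻ x in Ioc 0 r, ENNReal.ofReal x * volume (Icc (-θ) θ) := by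
        rw [Measure.volume_eq_prod, ← Measure.prod_restrict, lintegral_prod _ (by fun_prop)]
        simp
    _ = ENNReal.ofReal (r ^ 2 / 2) * ENNReal.ofReal (2 * θ) := by
        rw [lintegral_mul_const _ (by fun_prop), Real.volume_Icc,
          ← ofReal_integral_eq_lintegral_ofReal, ← intervalIntegral.integral_of_le hr, integral_id]
        · ring_nf
        · exact continuous_id.integrableOn_Ioc
        · exact (ae_restrict_mem measurableSet_Ioc).mono fun x hx ↦ hx.1.le
    _ = ENNReal.ofReal (r ^ 2 * θ) := by
        rw [← ENNReal.ofReal_mul (by positivity)]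
        ring_nf

lemma exists_linearIsometryEquiv_apply_eq {E F : Type*} [NormedAddCommGroup E]
    [InnerProductSpace ℝ E] [NormedAddCommGroup F] [InnerProductSpace ℝ F] (ψ : E ≃ₗᵢ[ℝ] F)
    {a : E} {u : F} (h : ‖a‖ = ‖u‖) :
    ∃ φ : E ≃ₗᵢ[ℝ] F, φ a = u :=
  ⟨ψ.trans (ℝ ∙ (ψ a - u))ᗮ.reflection, Submodule.reflection_sub (by rw [ψ.norm_map, h])⟩

lemma visionCone_eq (r : ℝ) (v : EuclideanSpace ℝ (Fin 2)) (θ : ℝ) :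
    visionCone r v θ = closedBall 0 r ∩ circularCone v θ := by
  ext x
  simp only [visionCone, circularCone, mem_inter_iff, mem_closedBall_zero_iff, mem_ofPred_eq,
    ge_iff_le]

lemma convex_visionCone {θ : ℝ} (hθ : 0 ≤ Real.cos θ) (r : ℝ) (v : EuclideanSpace ℝ (Fin 2)) :
    Convex ℝ (visionCone r v θ) :=
  visionCone_eq r v θ ▸ (convex_closedBall 0 r).inter (convex_circularCone hθ)

lemma closedBall_subset_visionCone {r θ : ℝ} (hr : 0 ≤ r) (hθ : 0 ≤ Real.sin θ)
    {v : EuclideanSpace ℝ (Fin 2)} (hv : v ≠ 0) :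
    closedBall ((r / (1 + Real.sin θ)) • (‖v‖⁻¹ • v)) (r / (1 + Real.sin θ) * Real.sin θ) ⊆
      visionCone r v θ := by
  have hd : 0 ≤ r / (1 + Real.sin θ) := by positivity
  have hu : ‖‖v‖⁻¹ • v‖ = 1 := norm_smul_inv_norm hv
  rw [visionCone_eq, ← circularCone_smul (inv_pos.2 (norm_pos_iff.2 hv))]
  refine subset_inter (closedBall_subset_closedBall' ?_) (closedBall_subset_circularCone hu hd)
  rw [dist_zero_right, norm_smul, hu, Real.norm_of_nonneg hd, ← mul_add, add_comm (Real.sin θ),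
    div_mul_cancel₀ r (by positivity)]

lemma volume_visionCone {r θ : ℝ} (hr : 0 ≤ r) (hθ : 0 ≤ θ) (hθπ : θ < π)
    {v : EuclideanSpace ℝ (Fin 2)} (hv : v ≠ 0) :
    volume (visionCone r v θ) = ENNReal.ofReal (r ^ 2 * θ) := by
  obtain ⟨φ, hφ⟩ := exists_linearIsometryEquiv_apply_eq Complex.orthonormalBasisOneI.repr
    (a := 1) (u := ‖v‖⁻¹ • v) (by rw [norm_one]; exact (norm_smul_inv_norm hv).symm)
  have hpre : φ ⁻¹' visionCone r v θ = closedBall 0 r ∩ circularCone 1 θ := by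
    rw [visionCone_eq, ← circularCone_smul (inv_pos.2 (norm_pos_iff.2 hv)), ← hφ, preimage_inter,
      φ.preimage_circularCone, φ.preimage_closedBall, map_zero]
  rw [← φ.measurePreserving.measure_preimage_emb φ.toHomeomorph.measurableEmbedding, hpre,
    Complex.volume_closedBall_inter_circularCone hr hθ hθπ]

/-- For `r > 0`, `v ≠ 0`, `θ ∈ (0, π/2)` and every `ε > 0` with
`ε(1 + 1/sin θ) ≤ r`, the measure of the `ε`-boundary of the vision cone satisfies
`Leb(∂^ε C(r,v,θ)) ≤ 4 r ε θ (1 + 1/sin θ)`. -/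
theorem stmt17 (r : ℝ) (hr : 0 < r) (v : EuclideanSpace ℝ (Fin 2)) (hv : v ≠ 0)
    (θ : ℝ) (hθ : θ ∈ Set.Ioo (0:ℝ) (Real.pi / 2))
    (ε : ℝ) (hε : 0 < ε) (hεr : ε * (1 + 1 / Real.sin θ) ≤ r) :
    volume (frontier (visionCone r v θ) + closedBall (0 : EuclideanSpace ℝ (Fin 2)) ε) ≤
      ENNReal.ofReal (4 * r * ε * θ * (1 + 1 / Real.sin θ)) := by
  obtain ⟨hθ0, hθπ⟩ := hθ
  have hsin : 0 < Real.sin θ := Real.sin_pos_of_pos_of_lt_pi hθ0 (by linarith [Real.pi_pos])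
  have hcos : 0 ≤ Real.cos θ := (Real.cos_pos_of_mem_Ioo ⟨by linarith, hθπ⟩).le
  have hvol := volume_visionCone hr.le hθ0.le (by linarith [Real.pi_pos]) hv
  set ρ := r / (1 + Real.sin θ) * Real.sin θ with hρ_def
  have hρ : 0 < ρ := by positivity
  have hερ : ε / ρ ≤ 1 := by
    rw [div_le_one hρ, hρ_def, div_mul_eq_mul_div, le_div_iff₀ (by positivity)]
    calc ε * (1 + Real.sin θ) = ε * (1 + 1 / Real.sin θ) * Real.sin θ := by field_simp; ring
      _ ≤ r * Real.sin θ := by gcongr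
  have key := (convex_visionCone hcos r v).addHaar_frontier_add_closedBall_le volume
    (hvol ▸ ENNReal.ofReal_ne_top) (closedBall_subset_visionCone hr.le hsin.le hv)
    (div_pos hε hρ) hερ
  rw [div_mul_cancel₀ _ hρ.ne', finrank_euclideanSpace_fin, hvol,
    show (1 + ε / ρ) ^ 2 - (1 - ε / ρ) ^ 2 = 4 * (ε / ρ) by ring,
    ← ENNReal.ofReal_mul (by positivity)] at key
  refine key.trans_eq (congrArg ENNReal.ofReal ?_)
  rw [hρ_def]
  field_simp
  ring
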